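/- The geometric measure of entanglement of the antisymmetric subspace A ⊂ C^d ⊗ C^d equals 1/2: every unit vector ψ in the antisymmetric subspace has largest squared Schmidt coefficient at most 1/2, and this bound is attained. -/

import Mathlib

/-- Partial trace over the second tensor factor. -/
noncomputable def ptrace₂ {a b : Type*} [Fintype b] (ρ : Matrix (a × b) (a × b) ℂ) :
    Matrix a a ℂ := Matrix.of fun i j => ∑ k, ρ (i, k) (j, k)

/-- Rank-one projector `|ψ⟩⟨ψ|`. -/
def proj {m : Type*} (ψ : m → ℂ) : Matrix m m ℂ := Matrix.of fun i j => ψ i * star (ψ j)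

/-- Largest eigenvalue of a Hermitian matrix, as the supremum of its quadratic form
over unit vectors. -/
noncomputable def lmax {m : Type*} [Fintype m] (ρ : Matrix m m ℂ) : ℝ :=
  sSup {r : ℝ | ∃ v : m → ℂ, (∑ i, Complex.normSq (v i)) = 1 ∧
    r = (dotProduct (star v) (ρ.mulVec v)).re}

/-!
Write `ψ` as its coefficient matrix `a`, which antisymmetry makes skew (`aᵀ = -a`), and put
`u = v̄`, `w = uᵀa`. Then `⟨v| Tr₂ |ψ⟩⟨ψ| |v⟩ = ‖w‖²` and, by skewness,
`2‖w‖² = ∑ᵢₖ aᵢₖ (uᵢ w̄ₖ - uₖ w̄ᵢ)`. Cauchy–Schwarz together with Lagrange's identity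
`∑ᵢₖ |uᵢ w̄ₖ - uₖ w̄ᵢ|² ≤ 2‖u‖²‖w‖²` gives `4‖w‖⁴ ≤ 2‖a‖²‖u‖²‖w‖²`, i.e. `‖w‖² ≤ 1/2` for unit `ψ`
and `v`.
The singlet `(eᵢ ⊗ eⱼ - eⱼ ⊗ eᵢ)/√2` with `v = eᵢ` attains the bound.
-/

open ComplexConjugate Matrix

section RCLike

variable {𝕜 : Type*} [RCLike 𝕜] {ι : Type*} [Fintype ι]

theorem RCLike.ofReal_norm_sq_eq_conj_mul (z : 𝕜) : ((‖z‖ ^ 2 : ℝ) : 𝕜) = conj z * z := by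
  rw [RCLike.conj_mul, RCLike.ofReal_pow]

-- Lagrange's identity
theorem sum_norm_sq_mul_sub_mul_swap_add (x y : ι → 𝕜) :
    ∑ i, ∑ k, ‖x i * y k - x k * y i‖ ^ 2 + 2 * ‖∑ i, conj (x i) * y i‖ ^ 2 =
      2 * (∑ i, ‖x i‖ ^ 2) * ∑ k, ‖y k‖ ^ 2 := by
  apply RCLike.ofReal_injective (K := 𝕜)
  have hpt : ∀ i k, ((‖x i * y k - x k * y i‖ ^ 2 : ℝ) : 𝕜) =
      conj (x i) * x i * (conj (y k) * y k) + conj (y i) * y i * (conj (x k) * x k)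
        - conj (x i) * y i * (x k * conj (y k)) - x i * conj (y i) * (conj (x k) * y k) := by
    intro i k
    rw [RCLike.ofReal_norm_sq_eq_conj_mul, map_sub, map_mul, map_mul]
    ring
  simp only [RCLike.ofReal_add, RCLike.ofReal_ofNat, hpt,
    RCLike.ofReal_norm_sq_eq_conj_mul, Finset.sum_add_distrib, Finset.sum_sub_distrib,
    ← Finset.mul_sum, ← Finset.sum_mul, map_sum, map_mul, RCLike.conj_conj]
  ring

theorem norm_sum_mul_sq_le {σ : Type*} (s : Finset σ) (f g : σ → 𝕜) :
    ‖∑ p ∈ s, f p * g p‖ ^ 2 ≤ (∑ p ∈ s, ‖f p‖ ^ 2) * ∑ p ∈ s, ‖g p‖ ^ 2 :=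
  calc ‖∑ p ∈ s, f p * g p‖ ^ 2 ≤ (∑ p ∈ s, ‖f p‖ * ‖g p‖) ^ 2 := by
        gcongr
        exact (norm_sum_le _ _).trans_eq (by simp only [norm_mul])
    _ ≤ (∑ p ∈ s, ‖f p‖ ^ 2) * ∑ p ∈ s, ‖g p‖ ^ 2 := Finset.sum_mul_sq_le_sq_mul_sq _ _ _

theorem two_mul_sum_norm_sq_vecMul_eq_of_transpose_eq_neg {a : Matrix ι ι 𝕜} (ha : aᵀ = -a)
    (u : ι → 𝕜) :
    ((2 * ∑ k, ‖(u ᵥ* a) k‖ ^ 2 : ℝ) : 𝕜) =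
      ∑ i, ∑ k, (u i * conj ((u ᵥ* a) k) - u k * conj ((u ᵥ* a) i)) * a i k := by
  set w := u ᵥ* a
  have hw : ∀ k, ∑ i, u i * a i k = w k := fun k => rfl
  have hw_neg : ∀ i, ∑ k, u k * a i k = -w i := by
    intro i
    rw [← hw, ← Finset.sum_neg_distrib]
    refine Finset.sum_congr rfl fun k _ => ?_
    rw [← transpose_apply a k i, ha, neg_apply, mul_neg]
  have h₁ : ∑ i, ∑ k, u i * conj (w k) * a i k = ∑ k, conj (w k) * w k := by
    rw [Finset.sum_comm]
    refine Finset.sum_congr rfl fun k _ => ?_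
    rw [← hw, Finset.mul_sum]
    exact Finset.sum_congr rfl fun i _ => by ring
  have h₂ : ∑ i, ∑ k, u k * conj (w i) * a i k = -∑ i, conj (w i) * w i := by
    rw [← Finset.sum_neg_distrib]
    refine Finset.sum_congr rfl fun i _ => ?_
    rw [neg_mul_eq_mul_neg, ← hw_neg, Finset.mul_sum]
    exact Finset.sum_congr rfl fun k _ => by ring
  simp only [sub_mul, Finset.sum_sub_distrib, h₁, h₂, map_mul, map_sum,
    RCLike.ofReal_norm_sq_eq_conj_mul, RCLike.ofReal_ofNat]
  ring

theorem sum_norm_sq_vecMul_le_of_transpose_eq_neg {a : Matrix ι ι 𝕜} (ha : aᵀ = -a)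
    (u : ι → 𝕜) :
    ∑ k, ‖(u ᵥ* a) k‖ ^ 2 ≤ (∑ i, ∑ k, ‖a i k‖ ^ 2) * (∑ i, ‖u i‖ ^ 2) / 2 := by
  set w := u ᵥ* a
  set Q : ι → ι → 𝕜 := fun i k => u i * conj (w k) - u k * conj (w i)
  have hcs : (2 * ∑ k, ‖w k‖ ^ 2) ^ 2 ≤ (∑ i, ∑ k, ‖Q i k‖ ^ 2) * ∑ i, ∑ k, ‖a i k‖ ^ 2 := by
    have h := norm_sum_mul_sq_le Finset.univ (fun p : ι × ι => Q p.1 p.2) (fun p => a p.1 p.2)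
    simp only [Fintype.sum_prod_type] at h
    rwa [← two_mul_sum_norm_sq_vecMul_eq_of_transpose_eq_neg ha, RCLike.norm_ofReal,
      abs_of_nonneg (by positivity)] at h
  have hQ : ∑ i, ∑ k, ‖Q i k‖ ^ 2 ≤ 2 * (∑ i, ‖u i‖ ^ 2) * ∑ k, ‖w k‖ ^ 2 := by
    have h := sum_norm_sq_mul_sub_mul_swap_add u (fun k => conj (w k))
    simp only [RCLike.norm_conj] at h
    linarith [sq_nonneg ‖∑ i, conj (u i) * conj (w i)‖]
  have hsq := hcs.trans (mul_le_mul_of_nonneg_right hQ (by positivity))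
  have hau : 0 ≤ (∑ i, ∑ k, ‖a i k‖ ^ 2) * ∑ i, ‖u i‖ ^ 2 := by positivity
  nlinarith

theorem dotProduct_mul_conjTranspose_mulVec {m n : Type*} [Fintype m] [Fintype n]
    (A : Matrix m n 𝕜) (v : m → 𝕜) :
    star v ⬝ᵥ (A * Aᴴ) *ᵥ v = ((∑ k, ‖(star v ᵥ* A) k‖ ^ 2 : ℝ) : 𝕜) := by
  rw [← mulVec_mulVec, dotProduct_mulVec, ← star_star v, ← star_vecMul, star_star]
  simp only [dotProduct, Pi.star_apply, RCLike.star_def, map_sum,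
    RCLike.ofReal_norm_sq_eq_conj_mul, mul_comm]

end RCLike

theorem ptrace₂_proj {m n : Type*} [Fintype n] (ψ : m × n → ℂ) :
    ptrace₂ (proj ψ) = of (Function.curry ψ) * (of (Function.curry ψ))ᴴ := by
  ext i j
  simp [ptrace₂, proj, mul_apply]

theorem of_prod_swap_mulVec {n : Type*} [Fintype n] [DecidableEq n] (ψ : n × n → ℂ) :
    (of fun p q : n × n => if p.1 = q.2 ∧ p.2 = q.1 then (1 : ℂ) else 0) *ᵥ ψ =
      ψ ∘ Prod.swap := by
  ext p
  have hswap : ∀ q : n × n, (p.1 = q.2 ∧ p.2 = q.1) ↔ q = p.swap := fun q => by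
    rw [Prod.ext_iff, Prod.fst_swap, Prod.snd_swap, eq_comm, and_comm, eq_comm (a := p.2)]
  simp [mulVec, dotProduct, hswap]

theorem sum_normSq_single_one {m : Type*} [Fintype m] [DecidableEq m] (i : m) :
    ∑ k, Complex.normSq ((Pi.single i 1 : m → ℂ) k) = 1 := by
  rw [Fintype.sum_eq_single i] <;> simp +contextual

theorem lmax_le {m : Type*} [Fintype m] {ρ : Matrix m m ℂ} {M : ℝ} (hM : 0 ≤ M)
    (h : ∀ v : m → ℂ, ∑ i, Complex.normSq (v i) = 1 → (star v ⬝ᵥ ρ *ᵥ v).re ≤ M) :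
    lmax ρ ≤ M :=
  Real.sSup_le (by rintro _ ⟨v, hv, rfl⟩; exact h v hv) hM

theorem lmax_eq {m : Type*} [Fintype m] {ρ : Matrix m m ℂ} {M : ℝ}
    (h : ∀ v : m → ℂ, ∑ i, Complex.normSq (v i) = 1 → (star v ⬝ᵥ ρ *ᵥ v).re ≤ M)
    {v : m → ℂ} (hv : ∑ i, Complex.normSq (v i) = 1) (hvM : (star v ⬝ᵥ ρ *ᵥ v).re = M) :
    lmax ρ = M :=
  IsGreatest.csSup_eq ⟨⟨v, hv, hvM.symm⟩, by rintro _ ⟨w, hw, rfl⟩; exact h w hw⟩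

theorem re_dotProduct_ptrace₂_proj_mulVec {m n : Type*} [Fintype m] [Fintype n]
    (ψ : m × n → ℂ) (v : m → ℂ) :
    (star v ⬝ᵥ ptrace₂ (proj ψ) *ᵥ v).re = ∑ k, ‖(star v ᵥ* of (Function.curry ψ)) k‖ ^ 2 := by
  rw [ptrace₂_proj, dotProduct_mul_conjTranspose_mulVec]
  exact Complex.ofReal_re _

theorem re_dotProduct_ptrace₂_proj_mulVec_le_half {n : Type*} [Fintype n] {ψ : n × n → ℂ}
    (hψ : ψ ∘ Prod.swap = -ψ) (hψ₁ : ∑ p, Complex.normSq (ψ p) = 1)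
    {v : n → ℂ} (hv : ∑ i, Complex.normSq (v i) = 1) :
    (star v ⬝ᵥ ptrace₂ (proj ψ) *ᵥ v).re ≤ 1 / 2 := by
  have ha : (of (Function.curry ψ))ᵀ = -of (Function.curry ψ) := by
    ext i k
    simpa using congrFun hψ (i, k)
  have h := sum_norm_sq_vecMul_le_of_transpose_eq_neg ha (star v)
  simp only [Complex.normSq_eq_norm_sq, Fintype.sum_prod_type] at hψ₁ hv
  simp only [of_apply, Function.curry_apply, hψ₁, Pi.star_apply, norm_star, hv] at h
  rw [re_dotProduct_ptrace₂_proj_mulVec]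
  linarith

noncomputable def singlet {n : Type*} [DecidableEq n] (i j : n) : n × n → ℂ :=
  ((√2)⁻¹ : ℂ) • (Pi.single (i, j) 1 - Pi.single (j, i) 1)

section singlet

variable {n : Type*} [DecidableEq n]

theorem singlet_comp_swap (i j : n) : singlet i j ∘ Prod.swap = -singlet i j := by
  ext p
  simp only [singlet, Function.comp_apply, Pi.smul_apply, Pi.sub_apply, Pi.single_apply,
    Prod.swap_eq_iff_eq_swap, Prod.swap_prod_mk, smul_eq_mul, Pi.neg_apply]
  ring

variable [Fintype n] {i j : n}

theorem sum_normSq_singlet (hij : i ≠ j) : ∑ p, Complex.normSq (singlet i j p) = 1 := by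
  rw [Fintype.sum_eq_add (i, j) (j, i) (by simp [hij])]
  · norm_num [singlet, hij]
  · rintro p ⟨h₁, h₂⟩
    simp [singlet, h₁, h₂]

theorem re_dotProduct_ptrace₂_proj_singlet (hij : i ≠ j) :
    (star (Pi.single i 1) ⬝ᵥ ptrace₂ (proj (singlet i j)) *ᵥ Pi.single i 1).re = 1 / 2 := by
  rw [re_dotProduct_ptrace₂_proj_mulVec, Fintype.sum_eq_single j]
  · simp [singlet, hij]
  · intro k hk
    simp [singlet, hk, hij]

end singlet

/-- The geometric measure of the antisymmetric subspace of `ℂ^d ⊗ ℂ^d` equals `1/2`: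
every unit antisymmetric vector has largest squared Schmidt coefficient at most `1/2`,
and this bound is attained. -/
theorem stmt11 (d : ℕ) (hd : 2 ≤ d)
    (SWAP : Matrix (Fin d × Fin d) (Fin d × Fin d) ℂ)
    (hSWAP : SWAP = Matrix.of fun p q => if p.1 = q.2 ∧ p.2 = q.1 then 1 else 0) :
    (∀ ψ : Fin d × Fin d → ℂ, SWAP.mulVec ψ = -ψ →
      (∑ p, Complex.normSq (ψ p)) = 1 → lmax (ptrace₂ (proj ψ)) ≤ 1 / 2) ∧
    (∃ ψ : Fin d × Fin d → ℂ, SWAP.mulVec ψ = -ψ ∧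
      (∑ p, Complex.normSq (ψ p)) = 1 ∧ lmax (ptrace₂ (proj ψ)) = 1 / 2) := by
  subst hSWAP
  simp only [of_prod_swap_mulVec]
  refine ⟨fun ψ hψ hψ₁ => lmax_le (by norm_num) fun v hv =>
    re_dotProduct_ptrace₂_proj_mulVec_le_half hψ hψ₁ hv, ?_⟩
  have : Nontrivial (Fin d) := Fin.nontrivial_iff_two_le.mpr hd
  obtain ⟨i, j, hij⟩ := exists_pair_ne (Fin d)
  refine ⟨singlet i j, singlet_comp_swap i j, sum_normSq_singlet hij, ?_⟩
  exact lmax_eq (fun v hv => re_dotProduct_ptrace₂_proj_mulVec_le_half (singlet_comp_swap i j)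
    (sum_normSq_singlet hij) hv) (sum_normSq_single_one i) (re_dotProduct_ptrace₂_proj_singlet hij)
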